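/- Fix W, E, T₀, ρ > 0 and 0 < T_s < 1/(2W). Let K ≥ 1 and let h₁, …, h_{2K} be given by the coefficients of p_K(z) = z^K · T_K^{[2cos(2πWT_s), 2]}(z + z⁻¹) = 1 − Σ_{i=1}^{2K} h_i z^i. Then for every x ∈ C_{W,E,T₀,ρ} and every n ∈ ℤ, the prediction error e_n = x(nT_s) − Σ_{i=1}^{2K} h_i x((n−i)T_s) satisfies |e_n| ≤ √(2WE) · 2 · ((1 − cos(2πWT_s))/2)^K. -/

import Mathlib

open MeasureTheory Real

/-- The class `C_{W,E,T₀,ρ}` of finite-energy bandlimited signals with decaying tails. -/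
def signalClass (W E T₀ ρ : ℝ) : Set (ℝ → ℂ) :=
  {x | ∃ X : ℝ → ℂ, MemLp X 2 volume ∧
    (∀ t : ℝ, x t = ∫ f in (-W)..W, X f * Complex.exp (2 * Real.pi * Complex.I * f * t)) ∧
    (∫ t : ℝ, ‖x t‖ ^ 2) ≤ E ∧
    ∀ t : ℝ, T₀ ≤ |t| → ‖x t‖ ≤ |t| ^ (-ρ)}

/-- The shifted Chebyshev polynomial `T_K^{[a,b]}(y) = 2((b-a)/4)^K T_K(2(y-a)/(b-a) - 1)`,
evaluated at a complex point `y`. -/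
noncomputable def chebShiftC (K : ℕ) (a b : ℝ) (y : ℂ) : ℂ :=
  2 * (((b : ℂ) - (a : ℂ)) / 4) ^ K *
    (Polynomial.Chebyshev.T ℂ (K : ℤ)).eval (2 / ((b : ℂ) - (a : ℂ)) * (y - (a : ℂ)) - 1)

/-- The Laurent-polynomial expression `p_K(z) = z^K ⬝ T_K^{[a,2]}(z + z⁻¹)`. -/
noncomputable def pKfun (K : ℕ) (a : ℝ) (z : ℂ) : ℂ := z ^ K * chebShiftC K a 2 (z + z⁻¹)

open scoped FourierTransform ENNReal
open Set

/-!
Write `x = 𝓕⁻ g` with `g` supported in `(-W, W]`. Since `p_K(z) = 1 - ∑ hᵢ zⁱ`, the prediction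
error at time `t` is `∫ g(f) e(ft) p_K(e(-f Ts)) df`. For `|f| ≤ W` the point `z = e(-f Ts)` lies
on the unit circle with `z + z⁻¹ = 2 cos θ` and `|θ| ≤ 2πW Ts < π`, so `z + z⁻¹` lies in
`[2 cos (2πW Ts), 2]`, where the shifted Chebyshev polynomial is bounded by
`2 ((1 - cos (2πW Ts)) / 2)^K`. It remains to bound `∫ |g|` by Cauchy–Schwarz and Plancherel:
`∫ |g| ≤ √(2W ∫ |g|²) = √(2W ∫ |x|²)`. Plancherel for such band-limited signals follows by
integrating Parseval's identity for the samples `x(s + n / L)`, `L > 2W`, over one sampling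
period `s ∈ (0, 1 / L]`.
-/

theorem Polynomial.Chebyshev.norm_eval_T_ofReal_le_one (n : ℤ) {x : ℝ} (hx : |x| ≤ 1) :
    ‖(T ℂ n).eval (x : ℂ)‖ ≤ 1 := by
  rw [← map_T (algebraMap ℝ ℂ), Polynomial.eval_map_algebraMap, ← Complex.coe_algebraMap,
    Polynomial.aeval_algebraMap_apply, Complex.coe_algebraMap, Complex.norm_real, Real.norm_eq_abs,
    Polynomial.coe_aeval_eq_eval]
  exact abs_eval_T_real_le_one n hx

theorem norm_chebShiftC_le (K : ℕ) {a b y : ℝ} (hab : a < b) (hy : y ∈ Icc a b) :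
    ‖chebShiftC K a b y‖ ≤ 2 * ((b - a) / 4) ^ K := by
  have hba : 0 < b - a := sub_pos.2 hab
  set u : ℝ := 2 / (b - a) * (y - a) - 1
  have hu : |u| ≤ 1 := by
    rw [abs_le]
    constructor
    · have : 0 ≤ 2 / (b - a) * (y - a) := mul_nonneg (by positivity) (by linarith [hy.1])
      linarith
    · have : 2 / (b - a) * (y - a) ≤ 2 := by
        rw [div_mul_eq_mul_div, div_le_iff₀ hba]; nlinarith [hy.2]
      linarith
  have harg : 2 / ((b : ℂ) - a) * ((y : ℂ) - a) - 1 = (u : ℂ) := by simp only [u]; push_cast; ring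
  have hscale : ((b : ℂ) - a) / 4 = ((b - a) / 4 : ℝ) := by push_cast; ring
  rw [chebShiftC, harg, hscale, norm_mul, norm_mul, norm_pow, Complex.norm_real,
    Real.norm_of_nonneg (by positivity), Complex.norm_two]
  exact mul_le_of_le_one_right (by positivity)
    (Polynomial.Chebyshev.norm_eval_T_ofReal_le_one K hu)

theorem Complex.exp_mul_I_add_inv (θ : ℝ) :
    Complex.exp (θ * Complex.I) + (Complex.exp (θ * Complex.I))⁻¹ = ((2 * Real.cos θ : ℝ) : ℂ) := by
  rw [← Complex.exp_neg, ← neg_mul, ← Complex.ofReal_neg, Complex.exp_mul_I, Complex.exp_mul_I,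
    ← Complex.ofReal_cos, ← Complex.ofReal_sin, ← Complex.ofReal_cos, ← Complex.ofReal_sin,
    Real.cos_neg, Real.sin_neg]
  push_cast; ring

theorem norm_pKfun_exp_mul_I_le (K : ℕ) {α θ : ℝ} (hα : 0 < α) (hαπ : α ≤ π) (hθ : |θ| ≤ α) :
    ‖pKfun K (2 * cos α) (Complex.exp (θ * Complex.I))‖ ≤ 2 * ((1 - cos α) / 2) ^ K := by
  have hcosα : cos α < 1 := by
    simpa using Real.cos_lt_cos_of_nonneg_of_le_pi le_rfl hαπ hα
  have hcosθ : cos α ≤ cos θ := by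
    rw [← Real.cos_abs θ]
    exact Real.cos_le_cos_of_nonneg_of_le_pi (abs_nonneg θ) hαπ hθ
  have hmem : 2 * cos θ ∈ Icc (2 * cos α) 2 := ⟨by linarith, by linarith [cos_le_one θ]⟩
  rw [pKfun, Complex.exp_mul_I_add_inv, norm_mul, norm_pow, Complex.norm_exp_ofReal_mul_I, one_pow,
    one_mul]
  convert norm_chebShiftC_le K (by linarith) hmem using 3
  ring

section Plancherel

variable {a b : ℝ} {g : ℝ → ℂ}

theorem integrable_of_memLp_two_restrict_Ioc (hg : MemLp g 2 (volume.restrict (Ioc a b)))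
    (hsupp : ∀ x ∉ Ioc a b, g x = 0) : Integrable g := by
  have : IsFiniteMeasure (volume.restrict (Ioc a b)) := isFiniteMeasure_restrict.2 (by simp)
  exact IntegrableOn.integrable_of_forall_notMem_eq_zero (hg.integrable one_le_two) hsupp

theorem Real.fourierInv_fourierChar_smul (g : ℝ → ℂ) (s t : ℝ) :
    𝓕⁻ (fun v ↦ 𝐞 (s * v) • g v) t = 𝓕⁻ g (t + s) := by
  simp only [Real.fourierInv_eq, RCLike.inner_apply, conj_trivial, smul_smul,
    ← AddChar.map_add_eq_mul, add_mul]

/-- The samples `𝓕⁻ g (n / (b - a))` are `b - a` times the Fourier coefficients of `g` on `(a, b]`,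
so this is Parseval's identity. -/
theorem hasSum_sq_norm_fourierInv_intCast_div (hab : a < b)
    (hg : MemLp g 2 (volume.restrict (Ioc a b))) (hsupp : ∀ x ∉ Ioc a b, g x = 0) :
    HasSum (fun n : ℤ ↦ ‖𝓕⁻ g (n / (b - a))‖ ^ 2) ((b - a) * ∫ x, ‖g x‖ ^ 2) := by
  have hL : 0 < b - a := sub_pos.2 hab
  have hcoeff (n : ℤ) : fourierCoeffOn hab g (-n) = (b - a)⁻¹ • 𝓕⁻ g (n / (b - a)) := by
    rw [fourierCoeffOn_eq_integral, one_div, intervalIntegral.integral_of_le hab.le,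
      setIntegral_eq_integral_of_forall_compl_eq_zero (fun x hx ↦ by simp [hsupp x hx]),
      Real.fourierInv_eq']
    congr 1
    refine integral_congr_ae (ae_of_all _ fun x ↦ ?_)
    simp only [neg_neg, fourier_coe_apply, inner_apply]
    congr 2
    push_cast
    field_simp
  have hnorm : ∫ x in a..b, ‖g x‖ ^ 2 = ∫ x, ‖g x‖ ^ 2 := by
    rw [intervalIntegral.integral_of_le hab.le]
    exact setIntegral_eq_integral_of_forall_compl_eq_zero (fun x hx ↦ by simp [hsupp x hx])
  have hP := (Equiv.neg ℤ).hasSum_iff.2 (hasSum_sq_fourierCoeffOn hab hg)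
  simp only [Function.comp_def, Equiv.neg_apply, hcoeff, norm_smul, mul_pow, hnorm] at hP
  have hsum : (b - a) * ∫ x, ‖g x‖ ^ 2 = (b - a) ^ 2 * ((b - a)⁻¹ • ∫ x, ‖g x‖ ^ 2) := by
    rw [smul_eq_mul]; field_simp
  rw [hsum]
  refine (hP.mul_left ((b - a) ^ 2)).congr_fun fun n ↦ ?_
  rw [norm_inv, Real.norm_of_nonneg hL.le]
  field_simp

theorem hasSum_sq_norm_fourierInv_add_intCast_div (hab : a < b)
    (hg : MemLp g 2 (volume.restrict (Ioc a b))) (hsupp : ∀ x ∉ Ioc a b, g x = 0) (s : ℝ) :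
    HasSum (fun n : ℤ ↦ ‖𝓕⁻ g (s + n / (b - a))‖ ^ 2) ((b - a) * ∫ x, ‖g x‖ ^ 2) := by
  have hnorm (v : ℝ) : ‖𝐞 (s * v) • g v‖ = ‖g v‖ := by
    rw [Circle.smul_def, norm_smul, Circle.norm_coe, one_mul]
  have hgs : MemLp (fun v ↦ 𝐞 (s * v) • g v) 2 (volume.restrict (Ioc a b)) :=
    hg.congr_norm ((Real.continuous_fourierChar.comp (continuous_const.mul continuous_id)
      ).aestronglyMeasurable.smul hg.1) (ae_of_all _ fun v ↦ (hnorm v).symm)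
  convert hasSum_sq_norm_fourierInv_intCast_div hab hgs
    (fun x hx ↦ by simp [hsupp x hx]) using 1
  · ext n
    rw [Real.fourierInv_fourierChar_smul, add_comm]
  · simp only [hnorm]

theorem lintegral_eq_setLIntegral_Ioc_tsum {T : ℝ} (hT : 0 < T) {φ : ℝ → ℝ≥0∞}
    (hφ : Measurable φ) : ∫⁻ t, φ t = ∫⁻ s in Ioc 0 T, ∑' n : ℤ, φ (s + n * T) := by
  have htranslate (n : ℤ) :
      ∫⁻ t in Ioc (0 + n • T) (0 + (n + 1) • T), φ t = ∫⁻ s in Ioc 0 T, φ (s + n * T) := by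
    rw [← (measurePreserving_add_right volume (n * T)).setLIntegral_comp_preimage_emb
      (measurableEmbedding_addRight _), preimage_add_const_Ioc]
    congr 2
    simp only [zsmul_eq_mul]
    congr 1 <;> push_cast <;> ring
  calc ∫⁻ t, φ t = ∑' n : ℤ, ∫⁻ t in Ioc (0 + n • T) (0 + (n + 1) • T), φ t := by
        rw [← setLIntegral_univ, ← iUnion_Ioc_add_zsmul hT 0,
          lintegral_iUnion (fun _ ↦ measurableSet_Ioc) (pairwise_disjoint_Ioc_add_zsmul 0 T)]
    _ = ∫⁻ s in Ioc 0 T, ∑' n : ℤ, φ (s + n * T) := by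
        rw [tsum_congr htranslate]
        exact (lintegral_tsum fun n ↦ (hφ.comp (measurable_add_const _)).aemeasurable).symm

theorem integral_sq_norm_fourierInv (hab : a < b)
    (hg : MemLp g 2 (volume.restrict (Ioc a b))) (hsupp : ∀ x ∉ Ioc a b, g x = 0) :
    ∫ t, ‖𝓕⁻ g t‖ ^ 2 = ∫ x, ‖g x‖ ^ 2 := by
  have hL : 0 < b - a := sub_pos.2 hab
  have hcont : Continuous (𝓕⁻ g) :=
    VectorFourier.fourierIntegral_continuous Real.continuous_fourierChar
      (by fun_prop) (integrable_of_memLp_two_restrict_Ioc hg hsupp)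
  have hsample (s : ℝ) : ∑' n : ℤ, ENNReal.ofReal (‖𝓕⁻ g (s + n * (b - a)⁻¹)‖ ^ 2)
      = ENNReal.ofReal ((b - a) * ∫ x, ‖g x‖ ^ 2) := by
    have h := hasSum_sq_norm_fourierInv_add_intCast_div hab hg hsupp s
    simp only [← div_eq_mul_inv]
    rw [← ENNReal.ofReal_tsum_of_nonneg (fun _ ↦ by positivity) h.summable, h.tsum_eq]
  have hlintegral : ∫⁻ t, ENNReal.ofReal (‖𝓕⁻ g t‖ ^ 2) = ENNReal.ofReal (∫ x, ‖g x‖ ^ 2) := by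
    rw [lintegral_eq_setLIntegral_Ioc_tsum (inv_pos.2 hL) (by fun_prop)]
    simp only [hsample]
    rw [setLIntegral_const, Real.volume_Ioc, sub_zero, ← ENNReal.ofReal_mul (by positivity)]
    congr 1
    field_simp
  rw [integral_eq_lintegral_of_nonneg_ae (ae_of_all _ fun _ ↦ by positivity)
    (by fun_prop), hlintegral, ENNReal.toReal_ofReal (integral_nonneg fun _ ↦ by positivity)]

end Plancherel

theorem Real.fourierInv_eq_integral_mul (g : ℝ → ℂ) (t : ℝ) :
    𝓕⁻ g t = ∫ v, (𝐞 (t * v) : ℂ) * g v := by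
  simp only [Real.fourierInv_eq, RCLike.inner_apply, conj_trivial, Circle.smul_def, smul_eq_mul]

theorem norm_fourierInv_sub_sum_shift_le {g : ℝ → ℂ} (hg : Integrable g) (S : Finset ℕ)
    (c : ℕ → ℂ) {τ B : ℝ}
    (hB : ∀ v, g v ≠ 0 → ‖1 - ∑ i ∈ S, c i * (𝐞 (-(τ * v)) : ℂ) ^ i‖ ≤ B) (t : ℝ) :
    ‖𝓕⁻ g t - ∑ i ∈ S, c i * 𝓕⁻ g (t - i * τ)‖ ≤ B * ∫ v, ‖g v‖ := by
  set m : ℝ → ℂ := fun v ↦ 1 - ∑ i ∈ S, c i * (𝐞 (-(τ * v)) : ℂ) ^ i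
  have hchar (r : ℝ → ℝ) (hr : Continuous r) : Integrable fun v ↦ (𝐞 (r v) : ℂ) * g v :=
    hg.bdd_mul (by fun_prop) (ae_of_all _ fun v ↦ (Circle.norm_coe _).le)
  have hshift (i : ℕ) (v : ℝ) : (𝐞 ((t - i * τ) * v) : ℂ) * g v
      = (𝐞 (t * v) : ℂ) * ((𝐞 (-(τ * v)) : ℂ) ^ i * g v) := by
    rw [← Circle.coe_pow, ← AddChar.map_nsmul_eq_pow, ← mul_assoc, ← Circle.coe_mul,
      ← AddChar.map_add_eq_mul, nsmul_eq_mul]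
    ring_nf
  have herror : 𝓕⁻ g t - ∑ i ∈ S, c i * 𝓕⁻ g (t - i * τ) = ∫ v, (𝐞 (t * v) : ℂ) * (m v * g v) := by
    simp only [Real.fourierInv_eq_integral_mul, ← integral_const_mul]
    rw [← integral_finsetSum _ fun i _ ↦ (hchar _ (by fun_prop)).const_mul _,
      ← integral_sub (hchar _ (by fun_prop))
        (integrable_finsetSum _ fun i _ ↦ (hchar _ (by fun_prop)).const_mul _)]
    congr 1; ext v
    simp only [hshift]
    simp only [m, sub_mul, mul_sub, one_mul, Finset.sum_mul, Finset.mul_sum]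
    refine congrArg₂ _ rfl (Finset.sum_congr rfl fun i _ ↦ by ring)
  have hbound (v : ℝ) : ‖(𝐞 (t * v) : ℂ) * (m v * g v)‖ ≤ B * ‖g v‖ := by
    rw [norm_mul, Circle.norm_coe, one_mul, norm_mul]
    by_cases hv : g v = 0
    · simp [hv]
    · exact mul_le_mul_of_nonneg_right (hB v hv) (norm_nonneg _)
  rw [herror, ← integral_const_mul]
  exact norm_integral_le_of_norm_le (hg.norm.const_mul B) (ae_of_all _ hbound)

theorem integral_norm_le_sqrt_measureReal_mul_integral_sq {α E : Type*} [MeasurableSpace α]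
    [NormedAddCommGroup E] {μ : Measure α} {s : Set α} {g : α → E} (hμs : μ s ≠ ∞)
    (hg : MemLp g 2 (μ.restrict s)) (hsupp : ∀ x ∉ s, g x = 0) :
    ∫ x, ‖g x‖ ∂μ ≤ √(μ.real s * ∫ x, ‖g x‖ ^ 2 ∂μ) := by
  have : IsFiniteMeasure (μ.restrict s) := isFiniteMeasure_restrict.2 hμs
  have hHolder := integral_mul_le_Lp_mul_Lq_of_nonneg Real.HolderConjugate.two_two
    (ae_of_all _ fun x ↦ norm_nonneg (g x)) (ae_of_all _ fun _ ↦ zero_le_one)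
    (by simpa using hg.norm) (memLp_const (1 : ℝ)) (μ := μ.restrict s)
  simp only [mul_one, one_pow, integral_const, smul_eq_mul, measureReal_restrict_apply_univ,
    Real.rpow_two] at hHolder
  rw [setIntegral_eq_integral_of_forall_compl_eq_zero (fun x hx ↦ by simp [hsupp x hx]),
    setIntegral_eq_integral_of_forall_compl_eq_zero (fun x hx ↦ by simp [hsupp x hx])] at hHolder
  rw [Real.sqrt_eq_rpow, Real.mul_rpow measureReal_nonneg (integral_nonneg fun _ ↦ by positivity),
    mul_comm]
  exact hHolder

theorem exists_fourierInv_eq_of_mem_signalClass {W E T₀ ρ : ℝ} (hW : 0 < W) {x : ℝ → ℂ}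
    (hx : x ∈ signalClass W E T₀ ρ) :
    ∃ g : ℝ → ℂ, MemLp g 2 (volume.restrict (Ioc (-W) W)) ∧ (∀ f ∉ Ioc (-W) W, g f = 0) ∧
      x = 𝓕⁻ g ∧ ∫ f, ‖g f‖ ^ 2 ≤ E := by
  obtain ⟨X, hX, hx_eq, hE, -⟩ := hx
  have hsupp : ∀ f ∉ Ioc (-W) W, (Ioc (-W) W).indicator X f = 0 :=
    fun f hf ↦ indicator_of_notMem hf X
  have hg : MemLp ((Ioc (-W) W).indicator X) 2 (volume.restrict (Ioc (-W) W)) :=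
    (hX.indicator measurableSet_Ioc).restrict _
  have hx_g : x = 𝓕⁻ ((Ioc (-W) W).indicator X) := by
    ext t
    rw [hx_eq, intervalIntegral.integral_of_le (by linarith),
      ← integral_indicator measurableSet_Ioc, Real.fourierInv_eq_integral_mul]
    congr 1; ext f
    by_cases hf : f ∈ Ioc (-W) W
    · rw [indicator_of_mem hf, indicator_of_mem hf, Real.fourierChar_apply, mul_comm]
      congr 2; push_cast; ring
    · rw [indicator_of_notMem hf, indicator_of_notMem hf, mul_zero]
  refine ⟨_, hg, hsupp, hx_g, ?_⟩
  rwa [← integral_sq_norm_fourierInv (by linarith) hg hsupp, ← hx_g]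

theorem prediction_error_chebyshev_bound_general
    (W E T₀ ρ Ts : ℝ) (hW : 0 < W)
    (hTs : 0 < Ts) (hNyq : Ts < 1 / (2 * W))
    (K : ℕ)
    (h : ℕ → ℝ)
    (hcoef : ∀ z : ℂ, z ≠ 0 →
      pKfun K (2 * Real.cos (2 * Real.pi * W * Ts)) z
        = 1 - ∑ i ∈ Finset.Icc 1 (2 * K), (h i : ℂ) * z ^ i)
    (x : ℝ → ℂ) (hx : x ∈ signalClass W E T₀ ρ) :
    ∀ n : ℤ,
      ‖x ((n : ℝ) * Ts)
          - ∑ i ∈ Finset.Icc 1 (2 * K), (h i : ℂ) * x (((n : ℝ) - (i : ℝ)) * Ts)‖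
        ≤ Real.sqrt (2 * W * E) * 2 * ((1 - Real.cos (2 * Real.pi * W * Ts)) / 2) ^ K := by
  intro n
  obtain ⟨g, hg, hsupp, rfl, henergy⟩ := exists_fourierInv_eq_of_mem_signalClass hW hx
  set α := 2 * π * W * Ts
  have hαπ : α ≤ π := by
    have := (lt_div_iff₀ (by positivity)).1 hNyq
    nlinarith [pi_pos]
  have hmultiplier (f : ℝ) (hf : g f ≠ 0) :
      ‖1 - ∑ i ∈ Finset.Icc 1 (2 * K), (h i : ℂ) * (𝐞 (-(Ts * f)) : ℂ) ^ i‖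
        ≤ 2 * ((1 - cos α) / 2) ^ K := by
    have hfW : f ∈ Ioc (-W) W := not_imp_comm.1 (hsupp f) hf
    rw [← hcoef _ (Circle.coe_ne_zero _), Real.fourierChar_apply]
    refine norm_pKfun_exp_mul_I_le K (by positivity) hαπ ?_
    calc |2 * π * -(Ts * f)| = 2 * π * |f| * Ts := by
          simp only [abs_mul, abs_neg, abs_two, abs_of_pos pi_pos, abs_of_pos hTs]
          ring
      _ ≤ 2 * π * W * Ts := by gcongr; exact abs_le.2 ⟨hfW.1.le, hfW.2⟩
  have hL1 : ∫ f, ‖g f‖ ≤ √(2 * W * E) := by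
    refine (integral_norm_le_sqrt_measureReal_mul_integral_sq (by simp) hg hsupp).trans ?_
    rw [Real.volume_real_Ioc_of_le (by linarith)]
    gcongr
    linarith
  calc _ = ‖𝓕⁻ g (n * Ts) - ∑ i ∈ Finset.Icc 1 (2 * K), (h i : ℂ) * 𝓕⁻ g (n * Ts - i * Ts)‖ := by
        simp only [sub_mul]
    _ ≤ 2 * ((1 - cos α) / 2) ^ K * ∫ f, ‖g f‖ :=
        norm_fourierInv_sub_sum_shift_le (integrable_of_memLp_two_restrict_Ioc hg hsupp) _ _
          hmultiplier _
    _ ≤ 2 * ((1 - cos α) / 2) ^ K * √(2 * W * E) := by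
        have : 0 ≤ 1 - cos α := sub_nonneg.2 (cos_le_one α)
        gcongr
    _ = _ := by ring

/-- With the Chebyshev choice of prediction coefficients, the prediction error is bounded by
`√(2WE) ⬝ 2 ((1 - cos(2πWTs))/2)^K` at all times, for every signal in the class. -/
theorem prediction_error_chebyshev_bound
    (W E T₀ ρ Ts : ℝ) (hW : 0 < W) (hE : 0 < E) (hT₀ : 0 < T₀) (hρ : 0 < ρ)
    (hTs : 0 < Ts) (hNyq : Ts < 1 / (2 * W))
    (K : ℕ) (hK : 1 ≤ K)
    (h : ℕ → ℝ)
    (hcoef : ∀ z : ℂ, z ≠ 0 →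
      pKfun K (2 * Real.cos (2 * Real.pi * W * Ts)) z
        = 1 - ∑ i ∈ Finset.Icc 1 (2 * K), (h i : ℂ) * z ^ i)
    (x : ℝ → ℂ) (hx : x ∈ signalClass W E T₀ ρ) :
    ∀ n : ℤ,
      ‖x ((n : ℝ) * Ts)
          - ∑ i ∈ Finset.Icc 1 (2 * K), (h i : ℂ) * x (((n : ℝ) - (i : ℝ)) * Ts)‖
        ≤ Real.sqrt (2 * W * E) * 2 * ((1 - Real.cos (2 * Real.pi * W * Ts)) / 2) ^ K :=
  prediction_error_chebyshev_bound_general W E T₀ ρ Ts hW hTs hNyq K h hcoef x hx
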